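/- Let κ ∈ (0,1) and let b : ℝ → ℝ be bounded, measurable and Lebesgue integrable with |b|_κ < ∞. Let φ'(x) = exp(−2 ∫_0^x b(z) dz). Then the product φ'·b satisfies |φ'·b|_κ < ∞. -/

import Mathlib

open MeasureTheory intervalIntegral Set
open scoped ENNReal NNReal

noncomputable section

/-- Square of the Sobolev–Slobodeckij seminorm
`|f|_κ² = ∫_ℝ ∫_ℝ |f(x) − f(y)|² / |x − y|^{2κ+1} dx dy` (as an extended real number). -/
def slobSq (κ : ℝ) (f : ℝ → ℝ) : ENNReal :=
  ∫⁻ x, ∫⁻ y, ENNReal.ofReal (|f x - f y| ^ 2 / |x - y| ^ (2 * κ + 1)) ∂volume ∂volume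

/-- `φ'(x) = exp(−2 ∫_0^x b(z) dz)`. -/
def phi' (b : ℝ → ℝ) (x : ℝ) : ℝ := Real.exp (-2 * ∫ z in (0:ℝ)..x, b z)

lemma exp_diff_le {s t M : ℝ} (hs : Real.exp s ≤ M) (ht : Real.exp t ≤ M) :
    |Real.exp s - Real.exp t| ≤ M * |s - t| := by
  wlog h : t ≤ s generalizing s t
  · have := this ht hs (le_of_not_ge h)
    rw [abs_sub_comm s t, abs_sub_comm (Real.exp s)]; exact this
  have h1 : t - s + 1 ≤ Real.exp (t - s) := Real.add_one_le_exp _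
  have h2 : Real.exp t = Real.exp s * Real.exp (t - s) := by
    rw [← Real.exp_add]; ring_nf
  have h3 : (0:ℝ) < Real.exp s := Real.exp_pos s
  have h4 : Real.exp t ≤ Real.exp s := Real.exp_le_exp.2 h
  rw [abs_of_nonneg (by linarith), abs_of_nonneg (by linarith : (0:ℝ) ≤ s - t)]
  nlinarith

lemma kernel_integrable {p : ℝ} (hp1 : 1 < p) (hp3 : p < 3) {c : ℝ} (hc : 0 ≤ c) :
    Integrable (fun u : ℝ => min (c * |u|) 1 ^ 2 / |u| ^ p) := by
  have hcont : Continuous fun u : ℝ => min (c * |u|) 1 ^ 2 :=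
    ((continuous_const.mul continuous_abs).min continuous_const).pow 2
  have hden : Continuous fun u : ℝ => |u| ^ p := by
    apply continuous_abs.rpow_const
    intro x; right; linarith
  have hKm : Measurable fun u : ℝ => min (c * |u|) 1 ^ 2 / |u| ^ p :=
    hcont.measurable.div hden.measurable
  have hpos : IntegrableOn (fun u : ℝ => min (c * |u|) 1 ^ 2 / |u| ^ p) (Ioi 0) := by
    rw [← Set.Ioc_union_Ioi_eq_Ioi (zero_le_one (α := ℝ)), integrableOn_union]
    constructor
    · rw [integrableOn_Ioc_iff_integrableOn_Ioo]
      apply Integrable.mono'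
        (((integrableOn_Ioo_rpow_iff one_pos).2 (by linarith : (-1:ℝ) < 2 - p)).const_mul (c ^ 2))
      · exact hKm.aestronglyMeasurable
      · filter_upwards [ae_restrict_mem measurableSet_Ioo] with u hu
        have hu0 : 0 < u := hu.1
        have hup : 0 < u ^ p := Real.rpow_pos_of_pos hu0 _
        rw [Real.norm_eq_abs, abs_of_nonneg (by positivity), abs_of_pos hu0]
        have hnum : min (c * u) 1 ^ 2 ≤ (c * u) ^ 2 := by
          have h0 : (0:ℝ) ≤ min (c * u) 1 := le_min (by positivity) zero_le_one
          exact pow_le_pow_left₀ h0 (min_le_left _ _) 2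
        calc min (c * u) 1 ^ 2 / u ^ p ≤ (c * u) ^ 2 / u ^ p := by
              apply div_le_div_of_nonneg_right hnum hup.le
          _ = c ^ 2 * u ^ (2 - p) := by
              rw [mul_pow, Real.rpow_sub hu0]
              rw [show u ^ (2:ℝ) = u ^ (2:ℕ) from Real.rpow_natCast u 2]
              ring
    · apply Integrable.mono' (integrableOn_Ioi_rpow_of_lt (by linarith : -p < -1) one_pos)
      · exact hKm.aestronglyMeasurable
      · filter_upwards [ae_restrict_mem measurableSet_Ioi] with u hu
        have hu0 : (0:ℝ) < u := lt_trans one_pos hu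
        have hup : 0 < u ^ p := Real.rpow_pos_of_pos hu0 _
        rw [Real.norm_eq_abs, abs_of_nonneg (by positivity), abs_of_pos hu0]
        have hnum : min (c * u) 1 ^ 2 ≤ 1 := by
          have h0 : (0:ℝ) ≤ min (c * u) 1 := le_min (by positivity) zero_le_one
          have h1 : min (c * u) 1 ≤ 1 := min_le_right _ _
          nlinarith
        calc min (c * u) 1 ^ 2 / u ^ p ≤ 1 / u ^ p := by
              apply div_le_div_of_nonneg_right hnum hup.le
          _ = u ^ (-p) := by rw [Real.rpow_neg hu0.le, one_div]
  have hneg : IntegrableOn (fun u : ℝ => min (c * |u|) 1 ^ 2 / |u| ^ p) (Iio 0) := by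
    rw [← (Measure.measurePreserving_neg (volume : Measure ℝ)).integrableOn_comp_preimage
        (Homeomorph.neg ℝ).measurableEmbedding]
    simpa [Function.comp_def, neg_preimage, neg_Iio, neg_zero, abs_neg] using hpos
  rw [← integrableOn_univ, ← Set.Iio_union_Ici (a := (0:ℝ)), integrableOn_union,
    integrableOn_Ici_iff_integrableOn_Ioi]
  exact ⟨hneg, hpos⟩

/-- Let `κ ∈ (0,1)` and let `b : ℝ → ℝ` be bounded, measurable and
Lebesgue integrable with `|b|_κ < ∞`. Then `|φ'·b|_κ < ∞`. -/
theorem statement5 (κ : ℝ) (hκ : κ ∈ Set.Ioo (0:ℝ) 1)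
    (b : ℝ → ℝ) (hmeas : Measurable b)
    (hint : Integrable b (volume : Measure ℝ))
    (hbd : ∃ C : ℝ, ∀ x, |b x| ≤ C)
    (hb : slobSq κ b < ⊤) :
    slobSq κ (fun x => phi' b x * b x) < ⊤ := by
  obtain ⟨hκ0, hκ1⟩ := hκ
  obtain ⟨C₀, hC₀⟩ := hbd
  have hp1 : (1:ℝ) < 2 * κ + 1 := by linarith
  have hp3 : 2 * κ + 1 < 3 := by linarith
  have hp0 : (0:ℝ) ≤ 2 * κ + 1 := by linarith
  set C : ℝ := max C₀ 0 with hCdef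
  have hC0 : 0 ≤ C := le_max_right _ _
  have hbC : ∀ x, |b x| ≤ C := fun x => (hC₀ x).trans (le_max_left _ _)
  set I : ℝ := ∫ z, |b z| with hIdef
  have habs : Integrable (fun z => |b z|) (volume : Measure ℝ) := hint.abs
  set M : ℝ := Real.exp (2 * I) with hMdef
  have hM0 : 0 < M := Real.exp_pos _
  -- bound on the primitive of b
  have hprim : ∀ x : ℝ, |∫ z in (0:ℝ)..x, b z| ≤ I := by
    intro x
    have h1 : ‖∫ z in (0:ℝ)..x, b z‖ ≤ |∫ z in (0:ℝ)..x, ‖b z‖| :=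
      intervalIntegral.norm_integral_le_abs_integral_norm
    simp only [Real.norm_eq_abs] at h1
    refine h1.trans ?_
    rcases le_total (0:ℝ) x with hx | hx
    · rw [intervalIntegral.integral_of_le hx,
        abs_of_nonneg (setIntegral_nonneg measurableSet_Ioc fun z _ => abs_nonneg _)]
      exact setIntegral_le_integral habs (Filter.Eventually.of_forall fun z => abs_nonneg _)
    · rw [intervalIntegral.integral_of_ge hx, abs_neg,
        abs_of_nonneg (setIntegral_nonneg measurableSet_Ioc fun z _ => abs_nonneg _)]
      exact setIntegral_le_integral habs (Filter.Eventually.of_forall fun z => abs_nonneg _)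
  have hφ_le : ∀ x, phi' b x ≤ M := by
    intro x
    rw [phi', hMdef]
    apply Real.exp_le_exp.2
    have := (abs_le.1 (hprim x)).1
    linarith
  have hφ_pos : ∀ x, 0 < phi' b x := fun x => Real.exp_pos _
  -- Lipschitz/boundedness estimate for phi'
  have hφ_diff : ∀ x y : ℝ, |phi' b x - phi' b y| ≤ M * min (2 * C * |x - y|) 2 := by
    intro x y
    have hd : |phi' b x - phi' b y|
        ≤ M * |(-2 * ∫ z in (0:ℝ)..x, b z) - (-2 * ∫ z in (0:ℝ)..y, b z)| :=
      exp_diff_le (hφ_le x) (hφ_le y)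
    have hseg : (∫ z in (0:ℝ)..x, b z) - (∫ z in (0:ℝ)..y, b z) = ∫ z in y..x, b z := by
      rw [← intervalIntegral.integral_add_adjacent_intervals
        (hint.intervalIntegrable (a := 0) (b := y)) (hint.intervalIntegrable (a := y) (b := x))]
      ring
    have hb2 : |∫ z in y..x, b z| ≤ C * |x - y| := by
      have := intervalIntegral.norm_integral_le_of_norm_le_const
        (C := C) (f := b) (a := y) (b := x) (fun z _ => by rw [Real.norm_eq_abs]; exact hbC z)
      simpa [Real.norm_eq_abs] using this
    have hA : |phi' b x - phi' b y| ≤ M * (2 * C * |x - y|) := by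
      refine hd.trans ?_
      have : |(-2 * ∫ z in (0:ℝ)..x, b z) - (-2 * ∫ z in (0:ℝ)..y, b z)|
          = 2 * |∫ z in y..x, b z| := by
        rw [show (-2 * ∫ z in (0:ℝ)..x, b z) - (-2 * ∫ z in (0:ℝ)..y, b z)
            = -2 * ((∫ z in (0:ℝ)..x, b z) - (∫ z in (0:ℝ)..y, b z)) by ring, hseg,
          abs_mul]
        norm_num
      rw [this]
      have := mul_le_mul_of_nonneg_left hb2 (by norm_num : (0:ℝ) ≤ 2)
      nlinarith
    have hB : |phi' b x - phi' b y| ≤ M * 2 := by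
      have h1 : |phi' b x - phi' b y| ≤ |phi' b x| + |phi' b y| := by
        rw [sub_eq_add_neg]
        exact (abs_add_le _ _).trans (by rw [abs_neg])
      rw [abs_of_pos (hφ_pos x), abs_of_pos (hφ_pos y)] at h1
      have := hφ_le x; have := hφ_le y
      linarith
    rw [mul_min_of_nonneg _ _ hM0.le]
    exact le_min hA hB
  -- notation
  set f : ℝ → ℝ := fun x => phi' b x * b x with hfdef
  have hφc : Continuous (phi' b) := by
    have hc : Continuous fun x : ℝ => ∫ z in (0:ℝ)..x, b z := hint.continuous_primitive 0
    exact Real.continuous_exp.comp (continuous_const.mul hc)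
  have hfm : Measurable f := hφc.measurable.mul hmeas
  have hdenc : Continuous fun q : ℝ × ℝ => |q.1 - q.2| ^ (2 * κ + 1) :=
    (continuous_fst.sub continuous_snd).abs.rpow_const fun q => Or.inr hp0
  have hFm : ∀ g : ℝ → ℝ, Measurable g →
      Measurable fun q : ℝ × ℝ =>
        ENNReal.ofReal (|g q.1 - g q.2| ^ 2 / |q.1 - q.2| ^ (2 * κ + 1)) := by
    intro g hg
    exact ENNReal.measurable_ofReal.comp
      ((((hg.comp measurable_fst).sub (hg.comp measurable_snd)).abs.pow_const 2).div
        hdenc.measurable)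
  have hprod : ∀ g : ℝ → ℝ, Measurable g → slobSq κ g =
      ∫⁻ q : ℝ × ℝ, ENNReal.ofReal (|g q.1 - g q.2| ^ 2 / |q.1 - q.2| ^ (2 * κ + 1))
        ∂((volume : Measure ℝ).prod volume) := by
    intro g hg
    unfold slobSq
    exact (lintegral_prod _ (hFm g hg).aemeasurable).symm
  -- kernel
  set K : ℝ → ℝ := fun u => min (C * |u|) 1 ^ 2 / |u| ^ (2 * κ + 1) with hKdef
  have hKint : Integrable K (volume : Measure ℝ) := kernel_integrable hp1 hp3 hC0
  have hKm : Measurable K :=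
    (((continuous_const.mul continuous_abs).min continuous_const).pow 2).measurable.div
      ((continuous_abs.rpow_const fun x => Or.inr hp0).measurable)
  -- pointwise key estimate
  have key : ∀ x y : ℝ,
      ENNReal.ofReal (|f x - f y| ^ 2 / |x - y| ^ (2 * κ + 1))
        ≤ ENNReal.ofReal (2 * M ^ 2 * |b x - b y| ^ 2 / |x - y| ^ (2 * κ + 1))
          + ENNReal.ofReal
              (8 * M ^ 2 * b y ^ 2 * min (C * |x - y|) 1 ^ 2 / |x - y| ^ (2 * κ + 1)) := by
    intro x y
    have hd0 : 0 ≤ |x - y| ^ (2 * κ + 1) := Real.rpow_nonneg (abs_nonneg _) _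
    rcases eq_or_lt_of_le hd0 with hdz | _
    · simp [hdz.symm, div_zero]
    · have h1 : |f x - f y| ≤ M * |b x - b y| + |b y| * (M * min (2 * C * |x - y|) 2) := by
        have e : f x - f y = phi' b x * (b x - b y) + b y * (phi' b x - phi' b y) := by
          simp only [hfdef]; ring
        rw [e]
        refine (abs_add_le _ _).trans (add_le_add ?_ ?_)
        · rw [abs_mul]
          exact mul_le_mul_of_nonneg_right
            (by rw [abs_of_pos (hφ_pos x)]; exact hφ_le x) (abs_nonneg _)
        · rw [abs_mul]
          exact mul_le_mul_of_nonneg_left (hφ_diff x y) (abs_nonneg _)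
      have hmm : min (2 * C * |x - y|) 2 = 2 * min (C * |x - y|) 1 := by
        rw [mul_min_of_nonneg _ _ (by norm_num : (0:ℝ) ≤ 2), mul_one, ← mul_assoc]
      have h2 : |f x - f y| ^ 2
          ≤ 2 * M ^ 2 * |b x - b y| ^ 2 + 8 * M ^ 2 * b y ^ 2 * min (C * |x - y|) 1 ^ 2 := by
        have habs2 := pow_le_pow_left₀ (abs_nonneg (f x - f y)) h1 2
        rw [hmm] at habs2
        have e2 : 2 * (M * |b x - b y|) ^ 2
            + 2 * (|b y| * (M * (2 * min (C * |x - y|) 1))) ^ 2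
            = 2 * M ^ 2 * |b x - b y| ^ 2 + 8 * M ^ 2 * b y ^ 2 * min (C * |x - y|) 1 ^ 2 := by
          rw [← sq_abs (b y)]; ring
        calc |f x - f y| ^ 2
            ≤ (M * |b x - b y| + |b y| * (M * (2 * min (C * |x - y|) 1))) ^ 2 := habs2
          _ ≤ 2 * (M * |b x - b y|) ^ 2
              + 2 * (|b y| * (M * (2 * min (C * |x - y|) 1))) ^ 2 := by
              nlinarith [sq_nonneg
                (M * |b x - b y| - |b y| * (M * (2 * min (C * |x - y|) 1)))]
          _ = _ := e2
      rw [← ENNReal.ofReal_add (by positivity) (by positivity), ← add_div]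
      exact ENNReal.ofReal_le_ofReal (div_le_div_of_nonneg_right h2 hd0)
  set G : ℝ × ℝ → ℝ≥0∞ := fun q =>
    ENNReal.ofReal (2 * M ^ 2 * |b q.1 - b q.2| ^ 2 / |q.1 - q.2| ^ (2 * κ + 1)) with hGdef
  set H : ℝ × ℝ → ℝ≥0∞ := fun q =>
    ENNReal.ofReal
      (8 * M ^ 2 * b q.2 ^ 2 * min (C * |q.1 - q.2|) 1 ^ 2 / |q.1 - q.2| ^ (2 * κ + 1)) with hHdef
  have hGm : Measurable G :=
    ENNReal.measurable_ofReal.comp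
      ((measurable_const.mul
        (((hmeas.comp measurable_fst).sub (hmeas.comp measurable_snd)).abs.pow_const 2)).div
        hdenc.measurable)
  have hHm : Measurable H := by
    apply ENNReal.measurable_ofReal.comp
    apply Measurable.div _ hdenc.measurable
    exact (measurable_const.mul ((hmeas.comp measurable_snd).pow_const 2)).mul
      ((((measurable_fst.sub measurable_snd).abs.const_mul C).min measurable_const).pow_const 2)
  have hG_top : (∫⁻ q, G q ∂((volume : Measure ℝ).prod volume)) < ⊤ := by
    have heq : ∀ q : ℝ × ℝ, G q = ENNReal.ofReal (2 * M ^ 2) *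
        ENNReal.ofReal (|b q.1 - b q.2| ^ 2 / |q.1 - q.2| ^ (2 * κ + 1)) := by
      intro q
      simp only [hGdef]
      rw [mul_div_assoc, ENNReal.ofReal_mul (by positivity)]
    calc (∫⁻ q, G q ∂((volume : Measure ℝ).prod volume))
        = ∫⁻ q : ℝ × ℝ, ENNReal.ofReal (2 * M ^ 2) *
            ENNReal.ofReal (|b q.1 - b q.2| ^ 2 / |q.1 - q.2| ^ (2 * κ + 1))
            ∂((volume : Measure ℝ).prod volume) := lintegral_congr heq
      _ = ENNReal.ofReal (2 * M ^ 2) *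
          ∫⁻ q : ℝ × ℝ, ENNReal.ofReal (|b q.1 - b q.2| ^ 2 / |q.1 - q.2| ^ (2 * κ + 1))
            ∂((volume : Measure ℝ).prod volume) := lintegral_const_mul _ (hFm b hmeas)
      _ = ENNReal.ofReal (2 * M ^ 2) * slobSq κ b := by rw [hprod b hmeas]
      _ < ⊤ := ENNReal.mul_lt_top ENNReal.ofReal_lt_top hb
  have hKK : (∫⁻ u, ENNReal.ofReal (K u)) < ⊤ := by
    calc (∫⁻ u, ENNReal.ofReal (K u)) ≤ ∫⁻ u, (‖K u‖₊ : ℝ≥0∞) :=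
          lintegral_mono fun u => Real.ofReal_le_enorm _
      _ < ⊤ := hKint.hasFiniteIntegral
  have hH_top : (∫⁻ q, H q ∂((volume : Measure ℝ).prod volume)) < ⊤ := by
    rw [lintegral_prod_symm _ hHm.aemeasurable]
    have hinner : ∀ y : ℝ, (∫⁻ x, H (x, y)) =
        ENNReal.ofReal (8 * M ^ 2 * b y ^ 2) * ∫⁻ u, ENNReal.ofReal (K u) := by
      intro y
      have h1 : ∀ x : ℝ, H (x, y) =
          ENNReal.ofReal (8 * M ^ 2 * b y ^ 2) * ENNReal.ofReal (K (x - y)) := by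
        intro x
        simp only [hHdef, hKdef]
        rw [mul_div_assoc, ENNReal.ofReal_mul (by positivity)]
      simp_rw [h1]
      have hmx : Measurable fun x : ℝ => ENNReal.ofReal (K (x - y)) :=
        (hKm.comp (measurable_id.sub measurable_const)).ennreal_ofReal
      rw [lintegral_const_mul _ hmx]
      congr 1
      exact lintegral_sub_right_eq_self (fun u => ENNReal.ofReal (K u)) y
    calc (∫⁻ y, ∫⁻ x, H (x, y))
        = ∫⁻ y, ENNReal.ofReal (8 * M ^ 2 * b y ^ 2) * ∫⁻ u, ENNReal.ofReal (K u) :=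
          lintegral_congr hinner
      _ = (∫⁻ y, ENNReal.ofReal (8 * M ^ 2 * b y ^ 2)) * ∫⁻ u, ENNReal.ofReal (K u) :=
          lintegral_mul_const _
            (ENNReal.measurable_ofReal.comp (measurable_const.mul (hmeas.pow_const 2)))
      _ < ⊤ := by
        apply ENNReal.mul_lt_top _ hKK
        have hbb : ∀ y : ℝ, ENNReal.ofReal (8 * M ^ 2 * b y ^ 2)
            ≤ ENNReal.ofReal (8 * M ^ 2 * C) * (‖b y‖₊ : ℝ≥0∞) := by
          intro y
          rw [← enorm_eq_nnnorm, Real.enorm_eq_ofReal_abs, ← ENNReal.ofReal_mul (by positivity)]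
          apply ENNReal.ofReal_le_ofReal
          have hby : b y ^ 2 ≤ C * |b y| := by nlinarith [sq_abs (b y), abs_nonneg (b y), hbC y]
          nlinarith [abs_nonneg (b y), hM0]
        calc (∫⁻ y, ENNReal.ofReal (8 * M ^ 2 * b y ^ 2))
            ≤ ∫⁻ y, ENNReal.ofReal (8 * M ^ 2 * C) * (‖b y‖₊ : ℝ≥0∞) := lintegral_mono hbb
          _ = ENNReal.ofReal (8 * M ^ 2 * C) * ∫⁻ y, (‖b y‖₊ : ℝ≥0∞) :=
              lintegral_const_mul _ hmeas.enorm
          _ < ⊤ := ENNReal.mul_lt_top ENNReal.ofReal_lt_top hint.hasFiniteIntegral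
  calc slobSq κ f
      = ∫⁻ q : ℝ × ℝ, ENNReal.ofReal (|f q.1 - f q.2| ^ 2 / |q.1 - q.2| ^ (2 * κ + 1))
          ∂((volume : Measure ℝ).prod volume) := hprod f hfm
    _ ≤ ∫⁻ q : ℝ × ℝ, (G q + H q) ∂((volume : Measure ℝ).prod volume) :=
        lintegral_mono fun q => key q.1 q.2
    _ = (∫⁻ q, G q ∂((volume : Measure ℝ).prod volume))
          + ∫⁻ q, H q ∂((volume : Measure ℝ).prod volume) := lintegral_add_left hGm _
    _ < ⊤ := ENNReal.add_lt_top.2 ⟨hG_top, hH_top⟩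


end
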